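/- arXiv:2602.09696 — 3 statements merged into one kernel-verified Lean document; each statement's English description precedes it below -/
import Mathlib

section
/- Let n ≥ 1 be a natural number, h > 0 a real number, and L the n×n complex circulant matrix L = circulant c, where c : ZMod n → ℂ satisfies c 0 = 2/h², c 1 = −1/h², c (−1) = −1/h², and c j = 0 for all other j. If b : ZMod n → ℂ satisfies the compatibility condition Σ_j b j = 0, then there exists a unique x : ZMod n → ℂ with Σ_j x j = 0 and L.mulVec x = b. -/
/-!
`L` maps zero-sum vectors to zero-sum vectors, since every column of a circulant matrix has the
same sum; on the finite-dimensional zero-sum subspace it therefore suffices to show that `L` is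
injective. For `n ≥ 3`, `L x = 0` says that the second differences of `x` vanish, so the first
differences are constant; they sum to zero around the cycle, hence vanish, and `x` is a constant
with zero sum, i.e. `x = 0`. For `n = 2` the stencil folds to `(2, -1)` and a direct computation
applies.
-/

open Matrix Complex Real

open Finset

namespace ZMod

variable {n : ℕ} [NeZero n] {M : Type*}

theorem eq_zero_of_forall_add_one_eq [AddCommMonoid M] [IsAddTorsionFree M]
    {y : ZMod n → M} (hy : ∀ i, y (i + 1) = y i) (hsum : ∑ i, y i = 0) : y = 0 := by
  have hconst : ∀ i, y i = y 0 := by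
    refine ZMod.natCast_zmod_surjective.forall.mpr fun k ↦ ?_
    induction k with
    | zero => simp
    | succ k ih => rw [Nat.cast_succ, hy, ih]
  have hy0 : n • y 0 = 0 := by simpa [hconst _, ZMod.card] using hsum
  funext i
  rw [hconst i, (nsmul_eq_zero_iff_right (NeZero.ne n)).mp hy0, Pi.zero_apply]

theorem eq_zero_of_forall_add_one_sub_eq_sub_sub_one [AddCommGroup M] [IsAddTorsionFree M]
    {x : ZMod n → M} (hx : ∀ i, x (i + 1) - x i = x i - x (i - 1)) (hsum : ∑ i, x i = 0) :
    x = 0 := by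
  have hdiff : (fun i ↦ x (i + 1) - x i) = 0 := by
    refine eq_zero_of_forall_add_one_eq (fun i ↦ by simpa using hx (i + 1)) ?_
    rw [sum_sub_distrib, sub_eq_zero]
    exact Fintype.sum_equiv (Equiv.addRight 1) _ _ fun _ ↦ rfl
  exact eq_zero_of_forall_add_one_eq (fun i ↦ sub_eq_zero.mp (congrFun hdiff i)) hsum

end ZMod

namespace Matrix

variable {ι R : Type*} [Fintype ι] [NonUnitalNonAssocSemiring R]

theorem circulant_mulVec_apply [AddCommGroup ι] (c x : ι → R) (i : ι) :
    (circulant c *ᵥ x) i = ∑ j, c j * x (i - j) :=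
  Fintype.sum_equiv (Equiv.subLeft i) _ _ fun j ↦ by simp [circulant_apply]

theorem sum_circulant_mulVec [AddGroup ι] (c x : ι → R) :
    ∑ i, (circulant c *ᵥ x) i = (∑ j, c j) * ∑ j, x j := by
  simp only [mulVec, dotProduct, circulant_apply]
  rw [sum_comm, mul_sum]
  refine sum_congr rfl fun j _ ↦ ?_
  rw [← sum_mul]
  congr 1
  exact Fintype.sum_equiv (Equiv.subRight j) _ _ fun _ ↦ rfl

theorem circulant_mulVec_apply_of_three_le {n : ℕ} [NeZero n] (hn : 3 ≤ n) {c : ZMod n → R}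
    (hc : ∀ j, j ≠ 0 → j ≠ 1 → j ≠ -1 → c j = 0) (x : ZMod n → R) (i : ZMod n) :
    (circulant c *ᵥ x) i = c 0 * x i + c 1 * x (i - 1) + c (-1) * x (i + 1) := by
  have : Fact (1 < n) := ⟨by omega⟩
  have : Fact (2 < n) := ⟨by omega⟩
  have h10 : (1 : ZMod n) ≠ 0 := one_ne_zero
  have hm10 : (-1 : ZMod n) ≠ 0 := neg_ne_zero.mpr one_ne_zero
  have hm11 : (-1 : ZMod n) ≠ 1 := ZMod.neg_one_ne_one
  rw [circulant_mulVec_apply, ← sum_subset (subset_univ {0, 1, -1})]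
  · rw [sum_insert (by simp [h10.symm, hm10.symm]), sum_pair hm11.symm]
    simp [add_assoc]
  · intro j _ hj
    simp only [mem_insert, mem_singleton, not_or] at hj
    rw [hc j hj.1 hj.2.1 hj.2.2, zero_mul]

end Matrix

def zeroSumSubmodule (R ι : Type*) [Semiring R] [Fintype ι] : Submodule R (ι → R) where
  carrier := {x | ∑ i, x i = 0}
  add_mem' := by simp_all [sum_add_distrib]
  zero_mem' := by simp
  smul_mem' := by simp_all [← mul_sum]

@[simp]
theorem mem_zeroSumSubmodule {R ι : Type*} [Semiring R] [Fintype ι] {x : ι → R} :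
    x ∈ zeroSumSubmodule R ι ↔ ∑ i, x i = 0 :=
  Iff.rfl

theorem eq_zero_of_circulant_mulVec_eq_zero {R : Type*} [Field R] [CharZero R] {n : ℕ}
    [NeZero n] {a : R} (ha : a ≠ 0) {c : ZMod n → R} (hc0 : c 0 = -2 * a) (hc1 : c 1 = a)
    (hcm1 : c (-1) = a) (hcz : ∀ j : ZMod n, j ≠ 0 → j ≠ 1 → j ≠ -1 → c j = 0)
    {x : ZMod n → R} (hsum : ∑ j, x j = 0) (hx : circulant c *ᵥ x = 0) : x = 0 := by
  obtain rfl | rfl | hn : n = 1 ∨ n = 2 ∨ 3 ≤ n := by have := NeZero.ne n; omega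
  · rw [show (1 : ZMod 1) = 0 from rfl, hc0] at hc1
    exact absurd (by linear_combination -hc1 : 3 * a = 0) (by simpa using ha)
  · have hsum_two (f : ZMod 2 → R) : ∑ j, f j = f 0 + f 1 := Fin.sum_univ_two f
    have hx1 : x 1 = -x 0 := eq_neg_of_add_eq_zero_right ((hsum_two x).symm.trans hsum)
    have hrow0 : c 0 * x 0 + c (-1) * x 1 = 0 := by
      simpa [hsum_two, circulant_mulVec_apply] using congrFun hx 0
    have hx0 : x 0 = 0 := by
      have : 3 * a * x 0 = 0 := by
        rw [hc0, hcm1, hx1] at hrow0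
        linear_combination -hrow0
      exact (mul_eq_zero.mp this).resolve_left (by simpa using ha)
    funext i
    fin_cases i
    · exact hx0
    · show x 1 = 0
      rw [hx1, hx0, neg_zero]
  · refine ZMod.eq_zero_of_forall_add_one_sub_eq_sub_sub_one (fun i ↦ ?_) hsum
    have hrow := congrFun hx i
    rw [Pi.zero_apply, circulant_mulVec_apply_of_three_le hn hcz, hc0, hc1, hcm1] at hrow
    have : a * (x (i + 1) - x i - (x i - x (i - 1))) = 0 := by linear_combination hrow
    exact sub_eq_zero.mp ((mul_eq_zero.mp this).resolve_left ha)

theorem periodic_poisson_unique_zero_mean_solution_general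
    (n : ℕ) [NeZero n] (h : ℝ) (hh : 0 < h)
    (c : ZMod n → ℂ)
    (hc0 : c 0 = 2 / (h : ℂ) ^ 2)
    (hc1 : c 1 = -1 / (h : ℂ) ^ 2)
    (hcm1 : c (-1) = -1 / (h : ℂ) ^ 2)
    (hcz : ∀ j : ZMod n, j ≠ 0 → j ≠ 1 → j ≠ -1 → c j = 0)
    (L : Matrix (ZMod n) (ZMod n) ℂ) (hL : L = Matrix.circulant c)
    (b : ZMod n → ℂ) (hb : ∑ j : ZMod n, b j = 0) :
    ∃! x : ZMod n → ℂ, (∑ j : ZMod n, x j = 0) ∧ L.mulVec x = b := by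
  subst hL
  set p := zeroSumSubmodule ℂ (ZMod n)
  have ha : -1 / (h : ℂ) ^ 2 ≠ 0 := by simpa using hh.ne'
  have hc0' : c 0 = -2 * (-1 / (h : ℂ) ^ 2) := by rw [hc0]; ring
  have hmaps : ∀ x ∈ p, mulVecLin (circulant c) x ∈ p := fun x hx ↦ by
    simp_all [p, sum_circulant_mulVec]
  have hinj : Set.InjOn (mulVecLin (circulant c)) p := fun x hx y hy hxy ↦ by
    refine sub_eq_zero.mp (eq_zero_of_circulant_mulVec_eq_zero ha hc0' hc1 hcm1 hcz ?_ ?_)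
    · simp_all [p, sum_sub_distrib]
    · simpa [mulVec_sub, sub_eq_zero] using hxy
  obtain ⟨x, hx, rfl⟩ := (LinearMap.injOn_iff_surjOn hmaps).mp hinj hb
  exact ⟨x, ⟨hx, rfl⟩, fun y ⟨hy, hyx⟩ ↦ hinj hy hx hyx⟩

/-- The periodic Poisson problem is uniquely solvable on the zero-mean subspace:
if `Σ_j b j = 0`, there is a unique `x` with `Σ_j x j = 0` and `L x = b`. -/
theorem periodic_poisson_unique_zero_mean_solution
    (n : ℕ) [NeZero n] (hn : 1 ≤ n) (h : ℝ) (hh : 0 < h)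
    (c : ZMod n → ℂ)
    (hc0 : c 0 = 2 / (h : ℂ) ^ 2)
    (hc1 : c 1 = -1 / (h : ℂ) ^ 2)
    (hcm1 : c (-1) = -1 / (h : ℂ) ^ 2)
    (hcz : ∀ j : ZMod n, j ≠ 0 → j ≠ 1 → j ≠ -1 → c j = 0)
    (L : Matrix (ZMod n) (ZMod n) ℂ) (hL : L = Matrix.circulant c)
    (b : ZMod n → ℂ) (hb : ∑ j : ZMod n, b j = 0) :
    ∃! x : ZMod n → ℂ, (∑ j : ZMod n, x j = 0) ∧ L.mulVec x = b :=
  periodic_poisson_unique_zero_mean_solution_general n h hh c hc0 hc1 hcm1 hcz L hL b hb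
end

section
/- Let A be an N×N Hermitian positive definite complex matrix with orthonormal eigenbasis (u_j)_{j=0}^{N−1} and eigenvalues (λ_j)_{j=0}^{N−1}. Let 0 < a ≤ b and let e₀ ∈ ℂ^N be a vector such that ⟪u_j, e₀⟫ = 0 whenever λ_j ∉ [a, b]. Then for every polynomial p with real coefficients, ‖p(A).mulVec e₀‖_A ≤ (sup_{λ ∈ [a,b]} |p(λ)|)·‖e₀‖_A, where ‖v‖_A := √(Re ⟪v, A.mulVec v⟫) is the energy norm and p(A) = Σ_j p(λ_j) u_j u_jᴴ is the functional calculus of A. -/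
open Matrix
open scoped ComplexOrder

/-- Spectral polynomial bound in the energy norm: if the initial error `e₀`
is supported on eigenvalues in `[a, b]`, then for every real polynomial `p`,
`‖p(A) e₀‖_A ≤ (sup_{λ ∈ [a,b]} |p(λ)|)·‖e₀‖_A`. -/
theorem spectral_polynomial_energy_norm_bound
    (N : ℕ) (A : Matrix (Fin N) (Fin N) ℂ) (hA : A.PosDef)
    (u : Fin N → Fin N → ℂ) (lam : Fin N → ℝ)
    (horth : ∀ j k : Fin N, star (u j) ⬝ᵥ u k = if j = k then 1 else 0)
    (heig : ∀ j : Fin N, A.mulVec (u j) = (lam j : ℂ) • u j)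
    (hbasis : ∀ v : Fin N → ℂ, v = ∑ j : Fin N, (star (u j) ⬝ᵥ v) • u j)
    (a b : ℝ) (ha : 0 < a) (hab : a ≤ b)
    (e₀ : Fin N → ℂ)
    (he₀ : ∀ j : Fin N, lam j ∉ Set.Icc a b → star (u j) ⬝ᵥ e₀ = 0)
    (p : Polynomial ℝ)
    (pA : Matrix (Fin N) (Fin N) ℂ)
    (hpA : pA = ∑ j : Fin N,
      ((p.eval (lam j) : ℝ) : ℂ) • Matrix.vecMulVec (u j) (star (u j))) :
    Real.sqrt ((star (pA.mulVec e₀) ⬝ᵥ A.mulVec (pA.mulVec e₀)).re) ≤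
      sSup ((fun l : ℝ => |p.eval l|) '' Set.Icc a b) *
        Real.sqrt ((star e₀ ⬝ᵥ A.mulVec e₀).re) := by
  set M := sSup ((fun l : ℝ => |p.eval l|) '' Set.Icc a b) with hMdef
  have hbdd : BddAbove ((fun l : ℝ => |p.eval l|) '' Set.Icc a b) :=
    (isCompact_Icc.image (p.continuous.abs)).bddAbove
  have hMle : ∀ l ∈ Set.Icc a b, |Polynomial.eval l p| ≤ M := fun l hl =>
    le_csSup hbdd ⟨l, hl, rfl⟩
  have hM0 : 0 ≤ M := le_trans (abs_nonneg _) (hMle a ⟨le_refl a, hab⟩)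
  set c : Fin N → ℂ := fun j => star (u j) ⬝ᵥ e₀ with hc
  -- helper: left dot-product with a combination
  have helperL : ∀ (d : Fin N → ℂ) (w : Fin N → ℂ),
      star (∑ j : Fin N, d j • u j) ⬝ᵥ w = ∑ j : Fin N, star (d j) * (star (u j) ⬝ᵥ w) := by
    intro d w
    simp only [dotProduct, Pi.star_apply, Finset.sum_apply, Pi.smul_apply, smul_eq_mul,
      star_sum, star_mul', Finset.sum_mul, Finset.mul_sum]
    rw [Finset.sum_comm]
    apply Finset.sum_congr rfl; intros; apply Finset.sum_congr rfl; intros; ring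
  have helperR : ∀ (d : Fin N → ℂ) (j : Fin N),
      star (u j) ⬝ᵥ (∑ k : Fin N, d k • u k) = d j := by
    intro d j
    have h : star (u j) ⬝ᵥ (∑ k : Fin N, d k • u k)
        = ∑ k : Fin N, d k * (star (u j) ⬝ᵥ u k) := by
      simp only [dotProduct, Finset.sum_apply, Pi.smul_apply, smul_eq_mul, Finset.mul_sum]
      rw [Finset.sum_comm]
      apply Finset.sum_congr rfl; intros; apply Finset.sum_congr rfl; intros; ring
    simp [h, horth]
  -- energy identity
  have energy : ∀ d : Fin N → ℂ,
      (star (∑ j : Fin N, d j • u j) ⬝ᵥ A.mulVec (∑ j : Fin N, d j • u j)).re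
        = ∑ j : Fin N, lam j * Complex.normSq (d j) := by
    intro d
    have h1 : A.mulVec (∑ j : Fin N, d j • u j) = ∑ j : Fin N, (d j * (lam j : ℂ)) • u j := by
      have : A.mulVec (∑ j : Fin N, d j • u j)
          = A.mulVecLin (∑ j : Fin N, d j • u j) := rfl
      rw [this, map_sum]
      apply Finset.sum_congr rfl
      intro j _
      rw [LinearMap.map_smul, Matrix.mulVecLin_apply, heig, smul_smul]
    rw [h1, helperL]
    have h2 : ∀ j : Fin N, star (d j) * (star (u j) ⬝ᵥ ∑ k : Fin N, (d k * (lam k : ℂ)) • u k)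
        = star (d j) * (d j * (lam j : ℂ)) := by
      intro j; rw [helperR (fun k => d k * (lam k : ℂ))]
    rw [Finset.sum_congr rfl (fun j _ => h2 j), Complex.re_sum]
    apply Finset.sum_congr rfl
    intro j _
    have : star (d j) * (d j * (lam j : ℂ)) = ((Complex.normSq (d j) : ℝ) : ℂ) * (lam j : ℂ) := by
      rw [← mul_assoc]
      congr 1
      rw [Complex.star_def, mul_comm, Complex.mul_conj]
    rw [this, ← Complex.ofReal_mul]
    simp [mul_comm]
  -- pA applied to e₀
  have hpAe : pA.mulVec e₀ = ∑ j : Fin N, (((p.eval (lam j) : ℝ) : ℂ) * c j) • u j := by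
    funext i
    simp only [hpA, Matrix.mulVec, dotProduct, Finset.sum_apply, Pi.smul_apply,
      Matrix.sum_apply, Matrix.smul_apply, Matrix.vecMulVec_apply, Pi.star_apply,
      smul_eq_mul, Finset.sum_mul, Finset.mul_sum, hc]
    rw [Finset.sum_comm]
    apply Finset.sum_congr rfl; intros; apply Finset.sum_congr rfl; intros; ring
  have he₀b : e₀ = ∑ j : Fin N, c j • u j := hbasis e₀
  have hLHS : (star (pA.mulVec e₀) ⬝ᵥ A.mulVec (pA.mulVec e₀)).re
      = ∑ j : Fin N, lam j * Complex.normSq (((p.eval (lam j) : ℝ) : ℂ) * c j) := by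
    rw [hpAe]; exact energy _
  have hRHS : (star e₀ ⬝ᵥ A.mulVec e₀).re = ∑ j : Fin N, lam j * Complex.normSq (c j) := by
    conv_lhs => rw [he₀b]
    exact energy c
  rw [hLHS, hRHS]
  -- termwise bound
  have key : ∑ j : Fin N, lam j * Complex.normSq (((p.eval (lam j) : ℝ) : ℂ) * c j)
      ≤ M ^ 2 * ∑ j : Fin N, lam j * Complex.normSq (c j) := by
    rw [Finset.mul_sum]
    apply Finset.sum_le_sum
    intro j _
    by_cases hcj : c j = 0
    · simp [hcj]
    · have hjin : lam j ∈ Set.Icc a b := by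
        by_contra h
        exact hcj (he₀ j h)
      have hl0 : 0 ≤ lam j := le_trans ha.le hjin.1
      have hp : |Polynomial.eval (lam j) p| ≤ M := hMle _ hjin
      have h1 : Complex.normSq (((p.eval (lam j) : ℝ) : ℂ) * c j)
          = (p.eval (lam j)) ^ 2 * Complex.normSq (c j) := by
        rw [Complex.normSq_mul, Complex.normSq_ofReal, sq]
      rw [h1]
      have h2 : (p.eval (lam j)) ^ 2 ≤ M ^ 2 := by
        rw [← sq_abs]
        exact pow_le_pow_left₀ (abs_nonneg _) hp 2
      calc lam j * ((p.eval (lam j)) ^ 2 * Complex.normSq (c j))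
          ≤ lam j * (M ^ 2 * Complex.normSq (c j)) := by
            apply mul_le_mul_of_nonneg_left _ hl0
            exact mul_le_mul_of_nonneg_right h2 (Complex.normSq_nonneg _)
        _ = M ^ 2 * (lam j * Complex.normSq (c j)) := by ring
  calc Real.sqrt (∑ j : Fin N, lam j * Complex.normSq (((p.eval (lam j) : ℝ) : ℂ) * c j))
      ≤ Real.sqrt (M ^ 2 * ∑ j : Fin N, lam j * Complex.normSq (c j)) :=
        Real.sqrt_le_sqrt key
    _ = M * Real.sqrt (∑ j : Fin N, lam j * Complex.normSq (c j)) := by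
        rw [Real.sqrt_mul (sq_nonneg M), Real.sqrt_sq hM0]
end

section
/- Let 0 < a ≤ b be real numbers and set κ = b/a. For every natural number k there exists a polynomial p with real coefficients such that deg p ≤ k, p(0) = 1, and |p(λ)| ≤ 2·((√κ − 1)/(√κ + 1))^k for all λ ∈ [a, b]. -/
/-!
The affine map `x ↦ (a + b - 2x)/(b - a)` sends `[a, b]` onto `[-1, 1]` and `0` to
`(κ + 1)/(κ - 1) = (r + r⁻¹)/2`, where `r = (√κ - 1)/(√κ + 1)`. Composing `T_k` with this map and
normalising at `0` gives a polynomial bounded on `[a, b]` by `1 / T_k((r + r⁻¹)/2)`, and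
`T_k((r + r⁻¹)/2) = (r^k + r^{-k})/2 ≥ r^{-k}/2` (write `(r + r⁻¹)/2 = cosh (log r)`).
When `a = b` we have `r = 0`, and `(1 - x/a)^k` does the job.
-/

open Polynomial Polynomial.Chebyshev

namespace Polynomial.Chebyshev

theorem eval_T_real_half_add_inv {z : ℝ} (hz : 0 < z) (n : ℤ) :
    (T ℝ n).eval ((z + z⁻¹) / 2) = (z ^ n + z⁻¹ ^ n) / 2 := by
  have hcosh : (z + z⁻¹) / 2 = Real.cosh (Real.log z) := by
    rw [Real.cosh_eq, Real.exp_neg, Real.exp_log hz]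
  have hexp {w : ℝ} (hw : 0 < w) : Real.exp (n * Real.log w) = w ^ n := by
    rw [← Real.log_zpow, Real.exp_log (zpow_pos hw n)]
  rw [hcosh, T_real_cosh, Real.cosh_eq, ← mul_neg, ← Real.log_inv, hexp hz, hexp (inv_pos.2 hz)]

theorem inv_eval_T_real_half_add_inv_le {r : ℝ} (hr : 0 < r) (n : ℕ) :
    ((T ℝ n).eval ((r + r⁻¹) / 2))⁻¹ ≤ 2 * r ^ n := by
  have hlower : r⁻¹ ^ n / 2 ≤ (T ℝ n).eval ((r + r⁻¹) / 2) := by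
    rw [eval_T_real_half_add_inv hr, zpow_natCast, zpow_natCast]
    gcongr
    exact le_add_of_nonneg_left (by positivity)
  calc ((T ℝ n).eval ((r + r⁻¹) / 2))⁻¹ ≤ (r⁻¹ ^ n / 2)⁻¹ := inv_anti₀ (by positivity) hlower
    _ = 2 * r ^ n := by rw [inv_div, inv_pow, div_inv_eq_mul]

end Polynomial.Chebyshev

theorem exists_natDegree_le_eval_eq_one_abs_eval_le {a b c : ℝ} (hab : a < b) (k : ℕ)
    (hc : (T ℝ k).eval ((b - a)⁻¹ * (a + b - 2 * c)) ≠ 0) :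
    ∃ p : ℝ[X], p.natDegree ≤ k ∧ p.eval c = 1 ∧ ∀ x ∈ Set.Icc a b,
      |p.eval x| ≤ |(T ℝ k).eval ((b - a)⁻¹ * (a + b - 2 * c))|⁻¹ := by
  set M := (T ℝ k).eval ((b - a)⁻¹ * (a + b - 2 * c))
  have hmap : ∀ x ∈ Set.Icc a b, |(b - a)⁻¹ * (a + b - 2 * x)| ≤ 1 := by
    rintro x ⟨hax, hxb⟩
    rw [abs_mul, abs_inv, abs_of_pos (sub_pos.2 hab)]
    exact inv_mul_le_one_of_le₀ (abs_le.2 ⟨by linarith, by linarith⟩) (sub_pos.2 hab).le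
  refine ⟨C M⁻¹ * (T ℝ k).comp (C (b - a)⁻¹ * (C (a + b) - 2 * X)), ?_, by simp [M, hc], ?_⟩
  · have hlin : (C (b - a)⁻¹ * (C (a + b) - 2 * X)).natDegree ≤ 1 := by compute_degree
    refine (natDegree_C_mul_le _ _).trans (natDegree_comp_le.trans ?_)
    calc (T ℝ k).natDegree * _ ≤ k * 1 := Nat.mul_le_mul (by simp [natDegree_T]) hlin
      _ = k := mul_one k
  · intro x hx
    simp only [eval_mul, eval_C, eval_comp, eval_sub, eval_X, eval_ofNat]
    rw [abs_mul, abs_inv, mul_comm]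
    exact mul_le_of_le_one_left (by positivity) (abs_eval_T_real_le_one k (hmap x hx))

theorem inv_sub_mul_add_eq_half_add_inv {a b s r : ℝ} (ha : 0 < a) (hs : 1 < s)
    (hb : b = a * s ^ 2) (hr : r = (s - 1) / (s + 1)) :
    (b - a)⁻¹ * (a + b) = (r + r⁻¹) / 2 := by
  have hs1 : s - 1 ≠ 0 := by linarith
  have hs2 : s ^ 2 - 1 ≠ 0 := by nlinarith
  subst hb hr
  field_simp
  ring

/-- Chebyshev min–max bound: for `0 < a ≤ b` with `κ = b/a` and every `k`,
there is a real polynomial `p` of degree at most `k` with `p(0) = 1` and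
`|p(λ)| ≤ 2·((√κ − 1)/(√κ + 1))^k` on `[a, b]`. -/
theorem chebyshev_minimax_bound
    (a b : ℝ) (ha : 0 < a) (hab : a ≤ b) (κ : ℝ) (hκ : κ = b / a) (k : ℕ) :
    ∃ p : Polynomial ℝ, p.natDegree ≤ k ∧ p.eval 0 = 1 ∧
      ∀ lam ∈ Set.Icc a b,
        |p.eval lam| ≤ 2 * ((Real.sqrt κ - 1) / (Real.sqrt κ + 1)) ^ k := by
  set r := (Real.sqrt κ - 1) / (Real.sqrt κ + 1) with hr
  rcases hab.eq_or_lt with rfl | hlt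
  · have hr0 : r = 0 := by simp [r, hκ, ha.ne']
    refine ⟨(1 - C a⁻¹ * X : ℝ[X]) ^ k, by compute_degree!, by simp, ?_⟩
    rintro x ⟨hax, hxa⟩
    obtain rfl := le_antisymm hxa hax
    cases k <;> simp [hr0, ha.ne']
  · have hs : 1 < Real.sqrt κ := by
      rw [hκ, Real.lt_sqrt zero_le_one, one_pow, one_lt_div ha]
      exact hlt
    have hb : b = a * Real.sqrt κ ^ 2 := by
      rw [Real.sq_sqrt (hκ ▸ (div_pos (ha.trans hlt) ha).le), hκ, mul_div_cancel₀ b ha.ne']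
    have hnode : (b - a)⁻¹ * (a + b - 2 * 0) = (r + r⁻¹) / 2 := by
      rw [mul_zero, sub_zero, inv_sub_mul_add_eq_half_add_inv ha hs hb hr]
    have hT : 1 ≤ (T ℝ k).eval ((r + r⁻¹) / 2) := by
      refine one_le_eval_T_real _ ?_
      rw [← hnode, le_inv_mul_iff₀ (sub_pos.2 hlt)]
      linarith
    obtain ⟨p, hdeg, h0, hp⟩ :=
      exists_natDegree_le_eval_eq_one_abs_eval_le hlt k (by rw [hnode]; linarith)
    refine ⟨p, hdeg, h0, fun x hx => (hp x hx).trans ?_⟩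
    rw [hnode, abs_of_pos (by linarith)]
    exact inv_eval_T_real_half_add_inv_le (div_pos (by linarith) (by linarith)) k
end
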